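/- arXiv:2407.06197 — 2 statements merged into one kernel-verified Lean document; each statement's English description precedes it below -/
import Mathlib

section
/- Let G be a finite simple graph comprised of communities C_1, …, C_r (r ≥ 2), all of which have the same size n. Let C_1, C_2 be two distinguished communities and let k be the total number of edges of G that are either intercommunity edges between C_1 and C_2, or intercommunity edges from any other community to C_1 or to C_2. If k ≤ n − 1, then for every α ∈ [0,1], every intercommunity edge e between C_1 and C_2 satisfies κ^α(e) ≤ 0. -/
open Finset

/-- A probability measure on the vertex set. -/
def IsProbMeasure {V : Type*} [Fintype V] (μ : V → ℝ) : Prop :=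
  (∀ z, 0 ≤ μ z) ∧ ∑ z, μ z = 1

/-- A transference plan between two probability measures. -/
def IsTransferencePlan {V : Type*} [Fintype V] (μ ν : V → ℝ) (π : V → V → ℝ) : Prop :=
  (∀ i j, 0 ≤ π i j) ∧ (∀ i, ∑ j, π i j = μ i) ∧ (∀ j, ∑ i, π i j = ν j)

/-- The 1-Wasserstein distance between two measures on a graph:
the infimum of the transport cost over all transference plans. -/
noncomputable def Wass {V : Type*} [Fintype V] (G : SimpleGraph V) (μ ν : V → ℝ) : ℝ :=
  sInf {c : ℝ | ∃ π : V → V → ℝ, IsTransferencePlan μ ν π ∧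
    c = ∑ i : V, ∑ j : V, π i j * (G.dist i j : ℝ)}

open scoped Classical in
/-- The α-lazy random walk measure at a vertex `x`:
mass α at `x`, mass (1-α)/dₓ at each neighbour of `x`. -/
noncomputable def lazyWalk {V : Type*} [Fintype V] (G : SimpleGraph V) (α : ℝ) (x : V) :
    V → ℝ :=
  fun z =>
    if z = x then α
    else if G.Adj x z then (1 - α) / ((G.neighborSet x).ncard : ℝ) else 0

/-- The α-Ollivier-Ricci curvature of the edge `xy`: κ = 1 − W(mₓ, m_y). -/
noncomputable def kappa {V : Type*} [Fintype V] (G : SimpleGraph V) (α : ℝ) (x y : V) : ℝ :=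
  1 - Wass G (lazyWalk G α x) (lazyWalk G α y)

/-!
Kantorovich's easy duality bounds `W(mₓ, m_y)` below by `E_{mₓ} f - E_{m_y} f` for every `f`
that changes by at most `1` along edges. Take `f` equal to `2` at the vertices of `C i` all of whose
neighbours lie in `C i`, `1` at the other vertices of `C i`, `-1` and `0` at the corresponding
vertices of `C j`, and `1` elsewhere. Since `C i` is a clique, every neighbour of `x` outside `C i`
is the end of an intercommunity edge at `x`, and every boundary vertex of `C i` other than `x`
carries a further one; so `k ≤ n - 1` leaves at least as many interior neighbours of `x` (value `2`)
as outside ones (value `≥ 0`), and the `mₓ`-mean of `f` is at least `f x = 1`. Symmetrically the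
`m_y`-mean is at most `f y = 0`, whence `W ≥ 1`.
-/

open SimpleGraph

section

variable {V : Type*} {G : SimpleGraph V}

theorem SimpleGraph.Walk.sub_le_length {f : V → ℝ} (hf : ∀ u v, G.Adj u v → f u - f v ≤ 1)
    {u v : V} (p : G.Walk u v) : f u - f v ≤ p.length := by
  induction p with
  | nil => simp
  | cons h _ ih =>
    rw [Walk.length_cons]
    push_cast
    linarith [hf _ _ h]

theorem SimpleGraph.Reachable.sub_le_dist {f : V → ℝ} (hf : ∀ u v, G.Adj u v → f u - f v ≤ 1)
    {u v : V} (h : G.Reachable u v) : f u - f v ≤ G.dist u v := by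
  obtain ⟨p, hp⟩ := h.exists_walk_length_eq_dist
  exact hp ▸ p.sub_le_length hf

variable [Fintype V]

section Transport

variable {μ ν : V → ℝ}

theorem IsTransferencePlan.le_left {π : V → V → ℝ} (hπ : IsTransferencePlan μ ν π) (a b : V) :
    π a b ≤ μ a :=
  hπ.2.1 a ▸ single_le_sum (fun b _ => hπ.1 a b) (mem_univ b)

theorem IsTransferencePlan.le_right {π : V → V → ℝ} (hπ : IsTransferencePlan μ ν π) (a b : V) :
    π a b ≤ ν b :=
  hπ.2.2 b ▸ single_le_sum (fun a _ => hπ.1 a b) (mem_univ a)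

theorem IsProbMeasure.isTransferencePlan_mul (hμ : IsProbMeasure μ) (hν : IsProbMeasure ν) :
    IsTransferencePlan μ ν fun a b => μ a * ν b :=
  ⟨fun a b => mul_nonneg (hμ.1 a) (hν.1 b), fun a => by rw [← mul_sum, hν.2, mul_one],
    fun b => by rw [← sum_mul, hμ.2, one_mul]⟩

theorem IsTransferencePlan.sum_sub_sum_le_cost {π : V → V → ℝ} (hπ : IsTransferencePlan μ ν π)
    {f : V → ℝ} (hf : ∀ a b, 0 < μ a → 0 < ν b → f a - f b ≤ G.dist a b) :
    ∑ a, f a * μ a - ∑ b, f b * ν b ≤ ∑ a, ∑ b, π a b * (G.dist a b : ℝ) := by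
  have hsplit : ∑ a, f a * μ a - ∑ b, f b * ν b = ∑ a, ∑ b, π a b * (f a - f b) := by
    simp only [mul_sub, sum_sub_distrib, ← hπ.2.1, ← hπ.2.2, mul_sum]
    rw [sum_comm (f := fun a b => π a b * f b)]
    simp only [mul_comm]
  rw [hsplit]
  refine sum_le_sum fun a _ => sum_le_sum fun b _ => ?_
  rcases (hπ.1 a b).eq_or_lt with h | h
  · simp [← h]
  · exact mul_le_mul_of_nonneg_left
      (hf a b (h.trans_le (hπ.le_left a b)) (h.trans_le (hπ.le_right a b))) h.le

theorem sub_le_wass (hμ : IsProbMeasure μ) (hν : IsProbMeasure ν) {f : V → ℝ}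
    (hf : ∀ a b, 0 < μ a → 0 < ν b → f a - f b ≤ G.dist a b) :
    ∑ a, f a * μ a - ∑ b, f b * ν b ≤ Wass G μ ν :=
  le_csInf ⟨_, _, hμ.isTransferencePlan_mul hν, rfl⟩ fun _ ⟨_, hπ, hc⟩ =>
    hc ▸ hπ.sum_sub_sum_le_cost hf

end Transport

section LazyWalk

variable {α : ℝ} {x : V}

theorem lazyWalk_nonneg (hα0 : 0 ≤ α) (hα1 : α ≤ 1) (x z : V) : 0 ≤ lazyWalk G α x z := by
  unfold lazyWalk
  split_ifs
  · exact hα0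
  · exact div_nonneg (by linarith) (Nat.cast_nonneg _)
  · rfl

theorem reachable_of_lazyWalk_pos {z : V} (h : 0 < lazyWalk G α x z) : G.Reachable x z := by
  unfold lazyWalk at h
  split_ifs at h with hzx hxz
  · exact hzx ▸ Reachable.rfl
  · exact hxz.reachable
  · exact absurd h (lt_irrefl 0)

variable [DecidableRel G.Adj]

theorem sum_mul_lazyWalk (g : V → ℝ) :
    ∑ z, g z * lazyWalk G α x z
      = α * g x + (1 - α) / G.degree x * ∑ z ∈ G.neighborFinset x, g z := by
  classical
  have hdeg : (G.neighborSet x).ncard = G.degree x := by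
    rw [← card_neighborFinset_eq_degree, neighborFinset_def, Set.ncard_eq_toFinset_card']
  have hterm : ∀ z, g z * lazyWalk G α x z
      = (if z = x then α * g z else 0)
        + (if z ∈ G.neighborFinset x then (1 - α) / G.degree x * g z else 0) := by
    intro z
    unfold lazyWalk
    simp only [hdeg, mem_neighborFinset]
    by_cases hzx : z = x
    · subst hzx
      simp [mul_comm]
    · by_cases hxz : G.Adj x z <;> simp [hzx, hxz, mul_comm]
  rw [sum_congr rfl fun z _ => hterm z, sum_add_distrib, sum_ite_eq', sum_ite_mem, univ_inter,
    mul_sum]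
  simp

theorem isProbMeasure_lazyWalk (hα0 : 0 ≤ α) (hα1 : α ≤ 1) (hx : 0 < G.degree x) :
    IsProbMeasure (lazyWalk G α x) := by
  refine ⟨lazyWalk_nonneg hα0 hα1 x, ?_⟩
  have h := sum_mul_lazyWalk (G := G) (α := α) (x := x) fun _ => 1
  simp only [one_mul, mul_one, sum_const, card_neighborFinset_eq_degree, nsmul_eq_mul] at h
  rw [h, div_mul_cancel₀ _ (by positivity)]
  ring

theorem le_sum_mul_lazyWalk (hα0 : 0 ≤ α) (hα1 : α ≤ 1) (hx : 0 < G.degree x) {g : V → ℝ}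
    {c : ℝ} (hgx : c ≤ g x) (hN : c * G.degree x ≤ ∑ z ∈ G.neighborFinset x, g z) :
    c ≤ ∑ z, g z * lazyWalk G α x z := by
  have hd : (0 : ℝ) < G.degree x := by exact_mod_cast hx
  have hmean : (1 - α) * c ≤ (1 - α) / G.degree x * ∑ z ∈ G.neighborFinset x, g z := by
    rw [div_mul_eq_mul_div, le_div_iff₀ hd, mul_assoc]
    exact mul_le_mul_of_nonneg_left hN (by linarith)
  rw [sum_mul_lazyWalk]
  nlinarith

theorem sum_mul_lazyWalk_le (hα0 : 0 ≤ α) (hα1 : α ≤ 1) (hx : 0 < G.degree x) {g : V → ℝ}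
    {c : ℝ} (hgx : g x ≤ c) (hN : ∑ z ∈ G.neighborFinset x, g z ≤ c * G.degree x) :
    ∑ z, g z * lazyWalk G α x z ≤ c := by
  have := le_sum_mul_lazyWalk hα0 hα1 hx (g := fun z => -g z) (c := -c) (neg_le_neg hgx)
    (by rw [sum_neg_distrib]; linarith)
  simp only [neg_mul, sum_neg_distrib] at this
  linarith

end LazyWalk

section Communities

variable [DecidableEq V] [DecidableRel G.Adj] {S T : Finset V}

theorem sum_card_neighborFinset_sdiff_le_ncard {E : Set (Sym2 V)}
    (hE : ∀ u ∈ S, ∀ v ∉ S, G.Adj u v → s(u, v) ∈ E) :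
    ∑ u ∈ S, #(G.neighborFinset u \ S) ≤ E.ncard := by
  classical
  rw [← card_sigma, Set.ncard_eq_toFinset_card']
  refine card_le_card_of_injOn (fun p => s(p.1, p.2)) (fun p hp => ?_) ?_
  · simp only [mem_coe, mem_sigma, mem_sdiff, mem_neighborFinset] at hp
    simpa using hE _ hp.1 _ hp.2.2 hp.2.1
  · rintro ⟨u, v⟩ huv ⟨u', v'⟩ huv' heq
    simp only [mem_coe, mem_sigma, mem_sdiff] at huv huv'
    rcases Sym2.eq_iff.1 heq with ⟨rfl, rfl⟩ | ⟨rfl, rfl⟩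
    · rfl
    · exact absurd huv.1 huv'.2.2

theorem card_sdiff_add_card_boundary_le {x : V} (hx : x ∈ S) :
    #(G.neighborFinset x \ S) + #{z ∈ S.erase x | ¬G.neighborFinset z ⊆ S}
      ≤ ∑ u ∈ S, #(G.neighborFinset u \ S) := by
  rw [← add_sum_erase S _ hx, card_filter]
  gcongr with z
  by_cases h : G.neighborFinset z ⊆ S
  · simp [h]
  · simpa [h] using sdiff_nonempty.2 h

theorem degree_le_sum_of_isClique {x : V} (hS : G.IsClique (S : Set V)) (hx : x ∈ S)
    (hbd : ∑ u ∈ S, #(G.neighborFinset u \ S) + 1 ≤ #S) {g : V → ℝ}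
    (hout : ∀ z ∈ G.neighborFinset x \ S, 0 ≤ g z) (hS1 : ∀ z ∈ S, 1 ≤ g z)
    (hS2 : ∀ z ∈ S, G.neighborFinset z ⊆ S → 2 ≤ g z) :
    (G.degree x : ℝ) ≤ ∑ z ∈ G.neighborFinset x, g z := by
  have hin : G.neighborFinset x ∩ S = S.erase x := by
    ext z
    simp only [mem_inter, mem_neighborFinset, mem_erase]
    exact ⟨fun h => ⟨h.1.ne', h.2⟩, fun h => ⟨hS hx h.2 h.1.symm, h.2⟩⟩
  have hcount : #(G.neighborFinset x \ S) ≤ #{z ∈ S.erase x | G.neighborFinset z ⊆ S} := by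
    have := card_sdiff_add_card_boundary_le (G := G) hx
    have := card_filter_add_card_filter_not (s := S.erase x) (fun z => G.neighborFinset z ⊆ S)
    rw [card_erase_of_mem hx] at this
    omega
  set I := {z ∈ S.erase x | G.neighborFinset z ⊆ S}
  have hsumI : (#(S.erase x) : ℝ) + #I ≤ ∑ z ∈ S.erase x, g z := by
    rw [card_eq_sum_ones, ← sum_boole, Nat.cast_sum, ← sum_add_distrib]
    refine sum_le_sum fun z hz => ?_
    have hzS := mem_of_mem_erase hz
    split_ifs with h
    · simpa [one_add_one_eq_two] using hS2 z hzS h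
    · simpa using hS1 z hzS
  calc (G.degree x : ℝ) = #(S.erase x) + #(G.neighborFinset x \ S) := by
        rw [← card_neighborFinset_eq_degree, ← card_inter_add_card_sdiff _ S, hin]
        push_cast; rfl
    _ ≤ ∑ z ∈ S.erase x, g z + ∑ z ∈ G.neighborFinset x \ S, g z := by
        have : (#(G.neighborFinset x \ S) : ℝ) ≤ #I := by exact_mod_cast hcount
        linarith [sum_nonneg hout]
    _ = ∑ z ∈ G.neighborFinset x, g z := by
        rw [← hin, sum_inter_add_sum_sdiff]

variable (G S T) in
def separatingPotential (v : V) : ℝ :=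
  if v ∈ S then (if G.neighborFinset v ⊆ S then 2 else 1)
  else if v ∈ T then (if G.neighborFinset v ⊆ T then -1 else 0)
  else 1

theorem separatingPotential_sub_le_one (hST : Disjoint S T) {u v : V} (huv : G.Adj u v) :
    separatingPotential G S T u - separatingPotential G S T v ≤ 1 := by
  have hu : ∀ A : Finset V, v ∉ A → ¬G.neighborFinset u ⊆ A := fun A hv h =>
    hv (h ((G.mem_neighborFinset u v).2 huv))
  have hv : ∀ A : Finset V, u ∉ A → ¬G.neighborFinset v ⊆ A := fun A hu h =>
    hu (h ((G.mem_neighborFinset v u).2 huv.symm))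
  have hT : ∀ {w}, w ∈ S → w ∉ T := fun hw => disjoint_left.1 hST hw
  unfold separatingPotential
  by_cases huS : u ∈ S <;> by_cases hvS : v ∈ S <;> by_cases huT : u ∈ T <;> by_cases hvT : v ∈ T
    <;> simp_all <;> split_ifs <;> norm_num

theorem degree_pos_of_not_subset {x : V} (hx : ¬G.neighborFinset x ⊆ S) : 0 < G.degree x := by
  rw [← card_neighborFinset_eq_degree]
  exact card_pos.2 ((sdiff_nonempty.2 hx).mono sdiff_subset)

variable {α : ℝ}

theorem one_le_sum_separatingPotential_mul_lazyWalk (hα0 : 0 ≤ α) (hα1 : α ≤ 1)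
    (hST : Disjoint S T) (hS : G.IsClique (S : Set V))
    (hbd : ∑ u ∈ S, #(G.neighborFinset u \ S) + 1 ≤ #S) {x : V} (hx : x ∈ S)
    (hxS : ¬G.neighborFinset x ⊆ S) :
    1 ≤ ∑ z, separatingPotential G S T z * lazyWalk G α x z := by
  have hfx : separatingPotential G S T x = 1 := by simp [separatingPotential, hx, hxS]
  refine le_sum_mul_lazyWalk hα0 hα1 (degree_pos_of_not_subset hxS) hfx.ge ?_
  rw [one_mul]
  refine degree_le_sum_of_isClique hS hx hbd (fun z hz => ?_) (fun z hz => ?_) fun z hz h => ?_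
  · have := separatingPotential_sub_le_one hST
      ((G.mem_neighborFinset x z).1 (mem_sdiff.1 hz).1)
    linarith
  · simp only [separatingPotential, hz, if_true]
    split_ifs <;> norm_num
  · simp [separatingPotential, hz, h]

theorem sum_separatingPotential_mul_lazyWalk_nonpos (hα0 : 0 ≤ α) (hα1 : α ≤ 1)
    (hST : Disjoint S T) (hT : G.IsClique (T : Set V))
    (hbd : ∑ u ∈ T, #(G.neighborFinset u \ T) + 1 ≤ #T) {y : V} (hy : y ∈ T)
    (hyT : ¬G.neighborFinset y ⊆ T) :
    ∑ z, separatingPotential G S T z * lazyWalk G α y z ≤ 0 := by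
  have hnS : ∀ {w}, w ∈ T → w ∉ S := fun hw => disjoint_right.1 hST hw
  have hfy : separatingPotential G S T y = 0 := by
    simp [separatingPotential, hy, hyT, hnS hy]
  refine sum_mul_lazyWalk_le hα0 hα1 (degree_pos_of_not_subset hyT) hfy.le ?_
  have := degree_le_sum_of_isClique hT hy hbd (g := fun z => 1 - separatingPotential G S T z)
    (fun z hz => ?_) (fun z hz => ?_) fun z hz h => ?_
  · rw [sum_sub_distrib, sum_const, card_neighborFinset_eq_degree, nsmul_one] at this
    linarith
  · have := separatingPotential_sub_le_one hST
      ((G.mem_neighborFinset y z).1 (mem_sdiff.1 hz).1).symm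
    linarith
  · simp only [separatingPotential, hz, hnS hz, if_true, if_false]
    split_ifs <;> norm_num
  · simp [separatingPotential, hz, hnS hz, h, one_add_one_eq_two]

end Communities

end

theorem nonpos_curvature_of_equal_sizes_general
    {V : Type*} [Fintype V] (G : SimpleGraph V) {r : ℕ}
    (C : Fin r → Finset V)
    (hpart : ∀ v : V, ∃! l, v ∈ C l)
    (hclique : ∀ l, ∀ u ∈ C l, ∀ v ∈ C l, u ≠ v → G.Adj u v)
    (n : ℕ) (hsize : ∀ l, (C l).card = n)
    (i j : Fin r) (hij : i ≠ j)
    (k : ℕ)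
    (hk : k = {e ∈ G.edgeSet | ∃ u v : V, e = s(u, v) ∧ (u ∈ C i ∨ u ∈ C j) ∧
      ¬ ∃ l, u ∈ C l ∧ v ∈ C l}.ncard)
    (hbound : k + 1 ≤ n)
    (α : ℝ) (hα0 : 0 ≤ α) (hα1 : α ≤ 1)
    (x y : V) (hx : x ∈ C i) (hy : y ∈ C j) (hxy : G.Adj x y) :
    kappa G α x y ≤ 0 := by
  classical
  have huniq : ∀ {v l l'}, v ∈ C l → v ∈ C l' → l = l' := fun h h' => (hpart _).unique h h'
  have hdisj : Disjoint (C i) (C j) := disjoint_left.2 fun _ hi hj => hij (huniq hi hj)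
  have hbd : ∀ l, (l = i ∨ l = j) → ∑ u ∈ C l, #(G.neighborFinset u \ C l) + 1 ≤ #(C l) := by
    refine fun l hl => hsize l ▸ le_trans (Nat.add_le_add_right ?_ 1) hbound
    refine hk ▸ sum_card_neighborFinset_sdiff_le_ncard fun u hu v hv huv =>
      ⟨huv, u, v, rfl, by rcases hl with rfl | rfl <;> simp [hu], fun ⟨l', hul', hvl'⟩ => hv ?_⟩
    exact huniq hul' hu ▸ hvl'
  have hxS : ¬G.neighborFinset x ⊆ C i := fun h =>
    disjoint_right.1 hdisj hy (h ((G.mem_neighborFinset x y).2 hxy))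
  have hyT : ¬G.neighborFinset y ⊆ C j := fun h =>
    disjoint_left.1 hdisj hx (h ((G.mem_neighborFinset y x).2 hxy.symm))
  have hmx := one_le_sum_separatingPotential_mul_lazyWalk hα0 hα1 hdisj
    (fun u hu v hv => hclique i u hu v hv) (hbd i (Or.inl rfl)) hx hxS
  have hmy := sum_separatingPotential_mul_lazyWalk_nonpos hα0 hα1 hdisj
    (fun u hu v hv => hclique j u hu v hv) (hbd j (Or.inr rfl)) hy hyT
  have hW := sub_le_wass (G := G) (isProbMeasure_lazyWalk hα0 hα1 (degree_pos_of_not_subset hxS))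
    (isProbMeasure_lazyWalk hα0 hα1 (degree_pos_of_not_subset hyT)) fun a b ha hb =>
      ((reachable_of_lazyWalk_pos ha).symm.trans (hxy.reachable.trans
        (reachable_of_lazyWalk_pos hb))).sub_le_dist fun _ _ => separatingPotential_sub_le_one hdisj
  unfold kappa
  linarith

/-- If all communities have the same size `n` and `k ≤ n − 1`, then every
intercommunity edge between the two distinguished communities has nonpositive
α-Ollivier-Ricci curvature for every `α ∈ [0,1]`. -/
theorem nonpos_curvature_of_equal_sizes
    {V : Type*} [Fintype V] (G : SimpleGraph V) {r : ℕ} (hr : 2 ≤ r)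
    (C : Fin r → Finset V)
    (hpart : ∀ v : V, ∃! l, v ∈ C l)
    (hne : ∀ l, (C l).Nonempty)
    (hclique : ∀ l, ∀ u ∈ C l, ∀ v ∈ C l, u ≠ v → G.Adj u v)
    (n : ℕ) (hsize : ∀ l, (C l).card = n)
    (i j : Fin r) (hij : i ≠ j)
    (k : ℕ)
    (hk : k = {e ∈ G.edgeSet | ∃ u v : V, e = s(u, v) ∧ (u ∈ C i ∨ u ∈ C j) ∧
      ¬ ∃ l, u ∈ C l ∧ v ∈ C l}.ncard)
    (hbound : k + 1 ≤ n)
    (α : ℝ) (hα0 : 0 ≤ α) (hα1 : α ≤ 1)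
    (x y : V) (hx : x ∈ C i) (hy : y ∈ C j) (hxy : G.Adj x y) :
    kappa G α x y ≤ 0 :=
  nonpos_curvature_of_equal_sizes_general G C hpart hclique n hsize i j hij k hk hbound α hα0 hα1 x
    y hx hy hxy
end

section
/- Let n ≥ 3 and let G_n be the graph on the 2n vertices a_0, …, a_{n−1}, b_0, …, b_{n−1} whose edges are: all pairs a_i a_j (i ≠ j), all pairs b_i b_j (i ≠ j), and the intercommunity edges a_i b_i for i = 0, …, n−2. Then for every α ∈ [0,1] and every i ∈ {0, …, n−2}, the edge a_i b_i has zero curvature: κ^α(a_i b_i) = 0. -/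
open Finset

/-- The graph on vertices `a₀,…,a_{n−1}` (the `Sum.inl` copy of `Fin n`) and
`b₀,…,b_{n−1}` (the `Sum.inr` copy): both copies are complete graphs, and the
intercommunity edges are `aᵢbᵢ` for `i = 0,…,n−2`. -/
def Gn (n : ℕ) : SimpleGraph (Fin n ⊕ Fin n) :=
  SimpleGraph.fromRel (fun u v =>
    match u, v with
    | Sum.inl _, Sum.inl _ => True
    | Sum.inr _, Sum.inr _ => True
    | Sum.inl i, Sum.inr j => i = j ∧ (i : ℕ) < n - 1
    | Sum.inr _, Sum.inl _ => False)

variable {n : ℕ}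

lemma Gn_adj_ll {j k : Fin n} : (Gn n).Adj (Sum.inl j) (Sum.inl k) ↔ j ≠ k := by
  simp [Gn, SimpleGraph.fromRel_adj]
lemma Gn_adj_rr {j k : Fin n} : (Gn n).Adj (Sum.inr j) (Sum.inr k) ↔ j ≠ k := by
  simp [Gn, SimpleGraph.fromRel_adj]
lemma Gn_adj_lr {j k : Fin n} : (Gn n).Adj (Sum.inl j) (Sum.inr k) ↔ j = k ∧ (j : ℕ) < n - 1 := by
  simp [Gn, SimpleGraph.fromRel_adj]
lemma Gn_adj_rl {j k : Fin n} : (Gn n).Adj (Sum.inr j) (Sum.inl k) ↔ k = j ∧ (k : ℕ) < n - 1 := by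
  simp [Gn, SimpleGraph.fromRel_adj]

lemma ncard_compl_singleton (hn : 1 ≤ n) (i : Fin n) : ({i}ᶜ : Set (Fin n)).ncard = n - 1 := by
  have h := Set.ncard_add_ncard_compl ({i} : Set (Fin n))
  rw [Set.ncard_singleton] at h
  simp [Nat.card_eq_fintype_card] at h
  omega

lemma ncard_nbhd_inl (hn : 1 ≤ n) {i : Fin n} (hi : (i : ℕ) < n - 1) :
    ((Gn n).neighborSet (Sum.inl i)).ncard = n := by
  have hset : (Gn n).neighborSet (Sum.inl i) = Sum.inl '' {i}ᶜ ∪ {Sum.inr i} := by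
    ext v
    cases v with
    | inl j =>
      simp [SimpleGraph.neighborSet, Gn_adj_ll, ne_comm]
    | inr j =>
      simp only [SimpleGraph.mem_neighborSet, Gn_adj_lr, Set.mem_union, Set.mem_image,
        Set.mem_compl_iff, Set.mem_singleton_iff, Sum.inr.injEq]
      constructor
      · rintro ⟨rfl, -⟩; right; rfl
      · rintro (⟨k, -, hk⟩ | rfl)
        · exact absurd hk (by simp)
        · exact ⟨rfl, hi⟩
  rw [hset, Set.ncard_union_eq (by simp) (Set.toFinite _) (Set.toFinite _),
    Set.ncard_image_of_injective _ Sum.inl_injective, Set.ncard_singleton,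
    ncard_compl_singleton hn]
  omega

lemma ncard_nbhd_inr (hn : 1 ≤ n) {i : Fin n} (hi : (i : ℕ) < n - 1) :
    ((Gn n).neighborSet (Sum.inr i)).ncard = n := by
  have hset : (Gn n).neighborSet (Sum.inr i) = Sum.inr '' {i}ᶜ ∪ {Sum.inl i} := by
    ext v
    cases v with
    | inl j =>
      simp only [SimpleGraph.mem_neighborSet, Gn_adj_rl, Set.mem_union, Set.mem_image,
        Set.mem_compl_iff, Set.mem_singleton_iff, Sum.inl.injEq]
      constructor
      · rintro ⟨rfl, -⟩; right; rfl
      · rintro (⟨k, -, hk⟩ | rfl)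
        · exact absurd hk (by simp)
        · exact ⟨rfl, hi⟩
    | inr j =>
      simp [SimpleGraph.neighborSet, Gn_adj_rr, ne_comm]
  rw [hset, Set.ncard_union_eq (by simp) (Set.toFinite _) (Set.toFinite _),
    Set.ncard_image_of_injective _ Sum.inr_injective, Set.ncard_singleton,
    ncard_compl_singleton hn]
  omega

variable (α : ℝ)

lemma mu_inl (hn : 1 ≤ n) {i : Fin n} (hi : (i : ℕ) < n - 1) (j : Fin n) :
    lazyWalk (Gn n) α (Sum.inl i) (Sum.inl j) = if j = i then α else (1 - α) / n := by
  unfold lazyWalk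
  rw [ncard_nbhd_inl hn hi]
  by_cases h : j = i
  · simp [h]
  · simp [h, Gn_adj_ll, Ne.symm h]

lemma mu_inr (hn : 1 ≤ n) {i : Fin n} (hi : (i : ℕ) < n - 1) (j : Fin n) :
    lazyWalk (Gn n) α (Sum.inl i) (Sum.inr j) = if j = i then (1 - α) / n else 0 := by
  unfold lazyWalk
  rw [ncard_nbhd_inl hn hi]
  by_cases h : j = i
  · subst h; simp [Gn_adj_lr, hi]
  · simp only [Gn_adj_lr]
    rw [if_neg (show ¬(Sum.inr j = Sum.inl i) by simp), if_neg h,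
      if_neg (show ¬(i = j ∧ (i : ℕ) < n - 1) by rintro ⟨rfl, -⟩; exact h rfl)]

lemma nu_inl (hn : 1 ≤ n) {i : Fin n} (hi : (i : ℕ) < n - 1) (j : Fin n) :
    lazyWalk (Gn n) α (Sum.inr i) (Sum.inl j) = if j = i then (1 - α) / n else 0 := by
  unfold lazyWalk
  rw [ncard_nbhd_inr hn hi]
  by_cases h : j = i
  · subst h; simp [Gn_adj_rl, hi]
  · simp [h, Gn_adj_rl]

lemma nu_inr (hn : 1 ≤ n) {i : Fin n} (hi : (i : ℕ) < n - 1) (j : Fin n) :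
    lazyWalk (Gn n) α (Sum.inr i) (Sum.inr j) = if j = i then α else (1 - α) / n := by
  unfold lazyWalk
  rw [ncard_nbhd_inr hn hi]
  by_cases h : j = i
  · simp [h]
  · simp [h, Gn_adj_rr, Ne.symm h]

/-- Sum of a function constant except at two points. -/
lemma sum_two_special {i m : Fin n} (him : i ≠ m) (g : Fin n → ℝ) (c : ℝ)
    (h : ∀ j, j ≠ i → j ≠ m → g j = c) :
    ∑ j, g j = ((n : ℝ) - 2) * c + g i + g m := by
  have key : ∀ j, g j = c + (if j = i then g i - c else 0) + (if j = m then g m - c else 0) := by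
    intro j
    by_cases h1 : j = i
    · subst h1; simp [him]
    · by_cases h2 : j = m
      · subst h2; simp [h1]
      · simp [h1, h2, h j h1 h2]
  rw [Finset.sum_congr rfl (fun j _ => key j)]
  rw [Finset.sum_add_distrib, Finset.sum_add_distrib]
  simp [Finset.sum_ite_eq', Finset.card_univ, nsmul_eq_mul]
  ring

lemma sum_one_special {i : Fin n} (g : Fin n → ℝ) (c : ℝ)
    (h : ∀ j, j ≠ i → g j = c) :
    ∑ j, g j = ((n : ℝ) - 1) * c + g i := by
  have key : ∀ j, g j = c + (if j = i then g i - c else 0) := by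
    intro j
    by_cases h1 : j = i
    · subst h1; simp
    · simp [h1, h j h1]
  rw [Finset.sum_congr rfl (fun j _ => key j)]
  rw [Finset.sum_add_distrib]
  simp [Finset.sum_ite_eq', Finset.card_univ, nsmul_eq_mul]
  ring

lemma walk_bound {V : Type*} {G : SimpleGraph V} (f : V → ℝ)
    (hf : ∀ u v, G.Adj u v → f v - f u ≤ 1) :
    ∀ {u v : V} (p : G.Walk u v), f v - f u ≤ (p.length : ℝ) := by
  intro u v p
  induction p with
  | nil => simp
  | @cons a b c h p ih =>
    have h1 := hf a b h
    rw [SimpleGraph.Walk.length_cons]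
    push_cast
    linarith

lemma dist_bound {V : Type*} {G : SimpleGraph V} (f : V → ℝ)
    (hf : ∀ u v, G.Adj u v → f v - f u ≤ 1) {u v : V} (hr : G.Reachable u v) :
    f v - f u ≤ (G.dist u v : ℝ) := by
  obtain ⟨p, hp⟩ := hr.exists_walk_length_eq_dist
  rw [← hp]
  exact walk_bound f hf p

lemma Gn_reachable (hn : 3 ≤ n) (u v : Fin n ⊕ Fin n) : (Gn n).Reachable u v := by
  set z : Fin n := ⟨0, by omega⟩ with hzdef
  have hz : ∀ w : Fin n ⊕ Fin n, (Gn n).Reachable w (Sum.inl z) := by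
    intro w
    have hbridge : (Gn n).Reachable (Sum.inr z) (Sum.inl z) :=
      (SimpleGraph.Adj.reachable (Gn_adj_rl.mpr ⟨rfl, by simp [hzdef]; omega⟩))
    cases w with
    | inl j =>
      by_cases h : j = z
      · subst h; rfl
      · exact (SimpleGraph.Adj.reachable (Gn_adj_ll.mpr h))
    | inr j =>
      by_cases h : j = z
      · subst h; exact hbridge
      · exact (SimpleGraph.Adj.reachable (Gn_adj_rr.mpr h)).trans hbridge
  exact (hz u).trans (hz v).symm

/-- Dual potential function. -/
noncomputable def fdual (n : ℕ) (m : Fin n) : Fin n ⊕ Fin n → ℝ :=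
  Sum.elim (fun j => if j = m then (-1 : ℝ) else 0) (fun j => if j = m then 2 else 1)

lemma fdual_lip (hn : 3 ≤ n) {m : Fin n} (hm : (m : ℕ) = n - 1) :
    ∀ u v, (Gn n).Adj u v → fdual n m v - fdual n m u ≤ 1 := by
  intro u v h
  cases u with
  | inl j =>
    cases v with
    | inl k => simp only [fdual, Sum.elim_inl]; split_ifs <;> norm_num
    | inr k =>
      obtain ⟨rfl, hlt⟩ := Gn_adj_lr.mp h
      have hjm : j ≠ m := fun hh => by subst hh; omega
      simp [fdual, hjm]
  | inr j =>
    cases v with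
    | inl k =>
      obtain ⟨h1, hlt⟩ := Gn_adj_rl.mp h
      subst h1
      have hkm : k ≠ m := fun hh => by subst hh; omega
      simp [fdual, hkm]
    | inr k => simp only [fdual, Sum.elim_inr]; split_ifs <;> norm_num

/-- Transport plan. -/
noncomputable def plan (n : ℕ) (i m : Fin n) (α p s : ℝ) :
    Fin n ⊕ Fin n → Fin n ⊕ Fin n → ℝ
  | Sum.inl j, Sum.inl k => if k = i then (if j = i then s else if j = m then p - s else 0) else 0
  | Sum.inl j, Sum.inr k => if j = k then (if j = i then α - s else if j = m then s else p) else 0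
  | Sum.inr j, Sum.inr k => if j = i then (if k = i then s else if k = m then p - s else 0) else 0
  | Sum.inr _, Sum.inl _ => 0

/-- In the graph `Gn n` (`n ≥ 3`), every intercommunity edge `aᵢbᵢ`
(`0 ≤ i ≤ n−2`) has zero α-Ollivier-Ricci curvature, for every `α ∈ [0,1]`. -/
theorem zero_curvature_config (n : ℕ) (hn : 3 ≤ n)
    (α : ℝ) (hα0 : 0 ≤ α) (hα1 : α ≤ 1)
    (i : Fin n) (hi : (i : ℕ) < n - 1) :
    kappa (Gn n) α (Sum.inl i) (Sum.inr i) = 0 := by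
  classical
  have hn1 : 1 ≤ n := by omega
  have hnR : (0 : ℝ) < n := by exact_mod_cast Nat.pos_of_ne_zero (by omega)
  set m : Fin n := ⟨n - 1, by omega⟩ with hmdef
  have hm : (m : ℕ) = n - 1 := by rw [hmdef]
  have him : i ≠ m := by
    intro h
    have : (i : ℕ) = n - 1 := by rw [h, hm]
    omega
  set p : ℝ := (1 - α) / n with hpdef
  have hp0 : 0 ≤ p := div_nonneg (by linarith) (le_of_lt hnR)
  set s : ℝ := min α p with hsdef
  have hs0 : 0 ≤ s := le_min hα0 hp0
  have hsα : s ≤ α := min_le_left _ _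
  have hsp : s ≤ p := min_le_right _ _
  have hnp : (n : ℝ) * p = 1 - α := by
    rw [hpdef]; field_simp
  -- measure value formulas
  have hmu_l : ∀ j, lazyWalk (Gn n) α (Sum.inl i) (Sum.inl j) = if j = i then α else p :=
    fun j => by rw [mu_inl α hn1 hi, hpdef]
  have hmu_r : ∀ j, lazyWalk (Gn n) α (Sum.inl i) (Sum.inr j) = if j = i then p else 0 :=
    fun j => by rw [mu_inr α hn1 hi, hpdef]
  have hnu_l : ∀ j, lazyWalk (Gn n) α (Sum.inr i) (Sum.inl j) = if j = i then p else 0 :=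
    fun j => by rw [nu_inl α hn1 hi, hpdef]
  have hnu_r : ∀ j, lazyWalk (Gn n) α (Sum.inr i) (Sum.inr j) = if j = i then α else p :=
    fun j => by rw [nu_inr α hn1 hi, hpdef]
  -- distance facts
  have hd_lr : ∀ j : Fin n, (j : ℕ) < n - 1 → (Gn n).dist (Sum.inl j) (Sum.inr j) = 1 :=
    fun j hj => SimpleGraph.dist_eq_one_iff_adj.mpr (Gn_adj_lr.mpr ⟨rfl, hj⟩)
  have hd_ll : (Gn n).dist (Sum.inl m) (Sum.inl i) = 1 :=
    SimpleGraph.dist_eq_one_iff_adj.mpr (Gn_adj_ll.mpr (Ne.symm him))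
  have hd_rr : (Gn n).dist (Sum.inr i) (Sum.inr m) = 1 :=
    SimpleGraph.dist_eq_one_iff_adj.mpr (Gn_adj_rr.mpr him)
  have hD0 : (0 : ℝ) ≤ ((Gn n).dist (Sum.inl m) (Sum.inr m) : ℝ) := by positivity
  have hD3 : ((Gn n).dist (Sum.inl m) (Sum.inr m) : ℝ) ≤ 3 := by
    have hl := SimpleGraph.dist_le
      (SimpleGraph.Walk.cons (Gn_adj_ll.mpr (Ne.symm him))
        (SimpleGraph.Walk.cons (Gn_adj_lr.mpr ⟨rfl, hi⟩)
          (SimpleGraph.Walk.cons (Gn_adj_rr.mpr him) SimpleGraph.Walk.nil)))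
    norm_num [SimpleGraph.Walk.length_cons, SimpleGraph.Walk.length_nil] at hl
    exact_mod_cast hl
  have hjm_lt : ∀ j : Fin n, j ≠ m → (j : ℕ) < n - 1 := by
    intro j hj
    have h1 : (j : ℕ) ≠ n - 1 := fun hh => hj (Fin.ext (by rw [hh, hm]))
    have := j.isLt
    omega
  -- the dual bound: every plan has cost ≥ 1
  have hA : ∑ z : Fin n ⊕ Fin n, lazyWalk (Gn n) α (Sum.inr i) z * fdual n m z = 1 := by
    rw [Fintype.sum_sum_type]
    have e1 : ∑ j : Fin n,
        lazyWalk (Gn n) α (Sum.inr i) (Sum.inl j) * fdual n m (Sum.inl j) = 0 := by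
      have hpt : ∀ j : Fin n,
          lazyWalk (Gn n) α (Sum.inr i) (Sum.inl j) * fdual n m (Sum.inl j) = 0 := by
        intro j
        rw [hnu_l]
        by_cases hj : j = i
        · subst hj; simp [fdual, him]
        · simp [hj]
      rw [Finset.sum_congr rfl fun j _ => hpt j]
      simp
    have e2 : ∑ j : Fin n,
        lazyWalk (Gn n) α (Sum.inr i) (Sum.inr j) * fdual n m (Sum.inr j)
          = ((n : ℝ) - 2) * p + α + 2 * p := by
      rw [sum_two_special him _ p
        (fun j hj1 hj2 => by simp [hnu_r, fdual, hj1, hj2])]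
      have hgi : lazyWalk (Gn n) α (Sum.inr i) (Sum.inr i) * fdual n m (Sum.inr i) = α := by
        rw [hnu_r]; simp [fdual, him]
      have hgm : lazyWalk (Gn n) α (Sum.inr i) (Sum.inr m) * fdual n m (Sum.inr m) = p * 2 := by
        rw [hnu_r, if_neg (Ne.symm him)]; simp [fdual]
      rw [hgi, hgm]
      ring
    rw [e1, e2]
    linarith
  have hB : ∑ z : Fin n ⊕ Fin n, lazyWalk (Gn n) α (Sum.inl i) z * fdual n m z = 0 := by
    rw [Fintype.sum_sum_type]
    have e1 : ∑ j : Fin n,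
        lazyWalk (Gn n) α (Sum.inl i) (Sum.inl j) * fdual n m (Sum.inl j) = -p := by
      rw [sum_two_special him _ 0
        (fun j hj1 hj2 => by simp [hmu_l, fdual, hj1, hj2])]
      have hgi : lazyWalk (Gn n) α (Sum.inl i) (Sum.inl i) * fdual n m (Sum.inl i) = 0 := by
        rw [hmu_l]; simp [fdual, him]
      have hgm : lazyWalk (Gn n) α (Sum.inl i) (Sum.inl m) * fdual n m (Sum.inl m) = -p := by
        rw [hmu_l, if_neg (Ne.symm him)]; simp [fdual]
      rw [hgi, hgm]
      ring
    have e2 : ∑ j : Fin n,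
        lazyWalk (Gn n) α (Sum.inl i) (Sum.inr j) * fdual n m (Sum.inr j) = p := by
      have hpt : ∀ j : Fin n,
          lazyWalk (Gn n) α (Sum.inl i) (Sum.inr j) * fdual n m (Sum.inr j)
            = if j = i then p else 0 := by
        intro j
        rw [hmu_r]
        by_cases hj : j = i
        · subst hj; simp [fdual, him]
        · simp [hj]
      rw [Finset.sum_congr rfl fun j _ => hpt j]
      simp
    rw [e1, e2]
    ring
  have hlow : ∀ c ∈ {c : ℝ | ∃ π : (Fin n ⊕ Fin n) → (Fin n ⊕ Fin n) → ℝ,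
      IsTransferencePlan (lazyWalk (Gn n) α (Sum.inl i)) (lazyWalk (Gn n) α (Sum.inr i)) π ∧
      c = ∑ u : Fin n ⊕ Fin n, ∑ v : Fin n ⊕ Fin n, π u v * ((Gn n).dist u v : ℝ)},
      (1 : ℝ) ≤ c := by
    rintro c ⟨π, ⟨hpos, hrow, hcol⟩, rfl⟩
    have hstep : ∑ u, ∑ v, π u v * (fdual n m v - fdual n m u)
        ≤ ∑ u, ∑ v, π u v * ((Gn n).dist u v : ℝ) :=
      Finset.sum_le_sum fun u _ => Finset.sum_le_sum fun v _ =>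
        mul_le_mul_of_nonneg_left (dist_bound _ (fdual_lip hn hm) (Gn_reachable hn u v))
          (hpos u v)
    have heq : ∑ u, ∑ v, π u v * (fdual n m v - fdual n m u) = 1 := by
      have e1 : ∑ u, ∑ v, π u v * fdual n m v = 1 := by
        rw [Finset.sum_comm]
        calc ∑ v, ∑ u, π u v * fdual n m v = ∑ v, (∑ u, π u v) * fdual n m v := by
              refine Finset.sum_congr rfl fun v _ => ?_
              rw [Finset.sum_mul]
          _ = 1 := by
              rw [← hA]
              refine Finset.sum_congr rfl fun v _ => ?_
              rw [hcol v]
      have e2 : ∑ u, ∑ v, π u v * fdual n m u = 0 := by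
        calc ∑ u, ∑ v, π u v * fdual n m u = ∑ u, (∑ v, π u v) * fdual n m u := by
              refine Finset.sum_congr rfl fun u _ => ?_
              rw [Finset.sum_mul]
          _ = 0 := by
              rw [← hB]
              refine Finset.sum_congr rfl fun u _ => ?_
              rw [hrow u]
      calc ∑ u, ∑ v, π u v * (fdual n m v - fdual n m u)
          = (∑ u, ∑ v, π u v * fdual n m v) - ∑ u, ∑ v, π u v * fdual n m u := by
            simp [mul_sub, Finset.sum_sub_distrib]
        _ = 1 := by rw [e1, e2]; ring
    linarith
  -- the explicit plan
  have hplan : IsTransferencePlan (lazyWalk (Gn n) α (Sum.inl i))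
      (lazyWalk (Gn n) α (Sum.inr i)) (plan n i m α p s) := by
    refine ⟨?_, ?_, ?_⟩
    · intro u v
      cases u <;> cases v <;> simp only [plan] <;> try split_ifs
      all_goals linarith
    · intro u
      cases u with
      | inl j =>
        rw [Fintype.sum_sum_type, hmu_l]
        simp only [plan, Finset.sum_ite_eq', Finset.sum_ite_eq, Finset.mem_univ, if_true]
        rcases eq_or_ne j i with h1 | h1
        · subst h1
          rw [if_pos rfl, if_pos rfl, if_pos rfl]
          ring
        · rcases eq_or_ne j m with h2 | h2
          · subst h2
            rw [if_neg h1, if_pos rfl, if_neg h1, if_pos rfl, if_neg h1]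
            ring
          · rw [if_neg h1, if_neg h2, if_neg h1, if_neg h2, if_neg h1]
            ring
      | inr j =>
        rw [Fintype.sum_sum_type, hmu_r]
        by_cases h1 : j = i
        · subst h1
          simp only [plan, if_pos rfl, Finset.sum_const_zero, zero_add]
          rw [sum_two_special him _ 0 (fun k hk1 hk2 => by simp [hk1, hk2])]
          simp [Ne.symm him]
        · simp [plan, h1]
    · intro v
      cases v with
      | inl k =>
        rw [Fintype.sum_sum_type, hnu_l]
        by_cases h1 : k = i
        · subst h1
          simp only [plan, if_pos rfl, Finset.sum_const_zero, add_zero]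
          rw [sum_two_special him _ 0 (fun j hj1 hj2 => by simp [hj1, hj2])]
          simp [Ne.symm him]
        · simp [plan, h1]
      | inr k =>
        rw [Fintype.sum_sum_type, hnu_r]
        simp only [plan, Finset.sum_ite_eq', Finset.sum_ite_eq, Finset.mem_univ, if_true]
        rcases eq_or_ne k i with h1 | h1
        · subst h1
          rw [if_pos rfl, if_pos rfl, if_pos rfl]
          ring
        · rcases eq_or_ne k m with h2 | h2
          · subst h2
            rw [if_neg h1, if_pos rfl, if_neg h1, if_pos rfl, if_neg h1]
            ring
          · rw [if_neg h1, if_neg h2, if_neg h1, if_neg h2, if_neg h1]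
            ring
  -- cost of the explicit plan
  have hcost : ∑ u : Fin n ⊕ Fin n, ∑ v : Fin n ⊕ Fin n,
      plan n i m α p s u v * ((Gn n).dist u v : ℝ) ≤ 1 := by
    have hT1 : ∑ j : Fin n, ∑ k : Fin n,
        plan n i m α p s (Sum.inl j) (Sum.inl k) * ((Gn n).dist (Sum.inl j) (Sum.inl k) : ℝ)
          = p - s := by
      have inner : ∀ j : Fin n, ∑ k : Fin n,
          plan n i m α p s (Sum.inl j) (Sum.inl k) * ((Gn n).dist (Sum.inl j) (Sum.inl k) : ℝ)
          = (if j = i then s else if j = m then p - s else 0) * ((Gn n).dist (Sum.inl j) (Sum.inl i) : ℝ) := by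
        intro j
        simp [plan, ite_mul, Finset.sum_ite_eq']
      rw [Finset.sum_congr rfl (fun j _ => inner j)]
      rw [sum_two_special him _ 0 (fun j hj1 hj2 => by simp [hj1, hj2])]
      rw [if_pos rfl, if_neg (Ne.symm him), if_pos rfl, hd_ll, SimpleGraph.dist_self]
      norm_num
    have hT2 : ∑ j : Fin n, ∑ k : Fin n,
        plan n i m α p s (Sum.inl j) (Sum.inr k) * ((Gn n).dist (Sum.inl j) (Sum.inr k) : ℝ)
          ≤ ((n : ℝ) - 2) * p + (α - s) + 3 * s := by
      have inner : ∀ j : Fin n, ∑ k : Fin n,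
          plan n i m α p s (Sum.inl j) (Sum.inr k) * ((Gn n).dist (Sum.inl j) (Sum.inr k) : ℝ)
          = (if j = i then α - s else if j = m then s else p) * ((Gn n).dist (Sum.inl j) (Sum.inr j) : ℝ) := by
        intro j
        simp [plan, ite_mul, Finset.sum_ite_eq, Finset.sum_ite_eq']
      rw [Finset.sum_congr rfl (fun j _ => inner j)]
      rw [sum_two_special him _ p (fun j hj1 hj2 => by
        rw [hd_lr j (hjm_lt j hj2)]
        simp [hj1, hj2])]
      have hsD : s * ((Gn n).dist (Sum.inl m) (Sum.inr m) : ℝ) ≤ s * 3 :=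
        mul_le_mul_of_nonneg_left hD3 hs0
      rw [if_pos rfl, if_neg (Ne.symm him), if_pos rfl, hd_lr i hi]
      push_cast
      nlinarith [hsD]
    have hT3 : ∑ j : Fin n, ∑ k : Fin n,
        plan n i m α p s (Sum.inr j) (Sum.inl k) * ((Gn n).dist (Sum.inr j) (Sum.inl k) : ℝ)
          = 0 := by
      simp [plan]
    have hT4 : ∑ j : Fin n, ∑ k : Fin n,
        plan n i m α p s (Sum.inr j) (Sum.inr k) * ((Gn n).dist (Sum.inr j) (Sum.inr k) : ℝ)
          = p - s := by
      have inner0 : ∀ j : Fin n, j ≠ i → ∑ k : Fin n,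
          plan n i m α p s (Sum.inr j) (Sum.inr k) * ((Gn n).dist (Sum.inr j) (Sum.inr k) : ℝ)
          = 0 := by
        intro j hj
        simp [plan, hj]
      rw [sum_one_special (i := i) _ 0 inner0]
      have inneri : ∑ k : Fin n,
          plan n i m α p s (Sum.inr i) (Sum.inr k) * ((Gn n).dist (Sum.inr i) (Sum.inr k) : ℝ)
          = p - s := by
        have hpt : ∀ k : Fin n,
            plan n i m α p s (Sum.inr i) (Sum.inr k) * ((Gn n).dist (Sum.inr i) (Sum.inr k) : ℝ)
            = (if k = i then s else if k = m then p - s else 0)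
                * ((Gn n).dist (Sum.inr i) (Sum.inr k) : ℝ) := by
          intro k
          simp [plan]
        rw [Finset.sum_congr rfl fun k _ => hpt k]
        rw [sum_two_special him _ 0 (fun k hk1 hk2 => by simp [hk1, hk2])]
        rw [if_pos rfl, if_neg (Ne.symm him), if_pos rfl, hd_rr, SimpleGraph.dist_self]
        norm_num
      rw [inneri]
      ring
    rw [Fintype.sum_sum_type]
    simp only [Fintype.sum_sum_type]
    rw [Finset.sum_add_distrib, Finset.sum_add_distrib, hT1, hT3, hT4]
    have hnp2 : ((n : ℝ) - 2) * p + (α - s) + 3 * s + (p - s) + (p - s) = 1 := by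
      have : (n : ℝ) * p = 1 - α := hnp
      nlinarith [this]
    linarith [hT2]
  -- conclusion
  suffices hW : Wass (Gn n) (lazyWalk (Gn n) α (Sum.inl i)) (lazyWalk (Gn n) α (Sum.inr i)) = 1 by
    unfold kappa
    rw [hW]
    ring
  unfold Wass
  have hmem : (∑ u : Fin n ⊕ Fin n, ∑ v : Fin n ⊕ Fin n,
      plan n i m α p s u v * ((Gn n).dist u v : ℝ)) ∈
      {c : ℝ | ∃ π : (Fin n ⊕ Fin n) → (Fin n ⊕ Fin n) → ℝ,
      IsTransferencePlan (lazyWalk (Gn n) α (Sum.inl i)) (lazyWalk (Gn n) α (Sum.inr i)) π ∧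
      c = ∑ u : Fin n ⊕ Fin n, ∑ v : Fin n ⊕ Fin n, π u v * ((Gn n).dist u v : ℝ)} :=
    ⟨plan n i m α p s, hplan, rfl⟩
  apply le_antisymm
  · exact (csInf_le ⟨1, fun c hc => hlow c hc⟩ hmem).trans hcost
  · exact le_csInf ⟨_, hmem⟩ hlow
end
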